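/- For any LTS I and any ν-calculus expression N in normal form over a finite alphabet Σ: I ⊨ N (I satisfies N under the maximal fixed point semantics) if and only if I ≤m N, where I is regarded as a ν-calculus implementation via the embedding of LTS into normal-form ν-calculus expressions and ≤m is ν-calculus modal refinement. -/

import Mathlib

open Set

/-- A labeled transition system over alphabet `A` with state space `S`. -/
structure LTS (A : Type) (S : Type) where
  init : Set S
  trans : Set (S × A × S)

/-- A disjunctive modal transition system. -/
structure DMTS (A : Type) (S : Type) where
  init : Set S
  may : Set (S × A × S)
  must : Set (S × Set (A × S))

/-- The DMTS consistency condition: must-transitions are backed by may-transitions. -/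
def DMTS.Consistent {A S : Type} (D : DMTS A S) : Prop :=
  ∀ s N, (s, N) ∈ D.must → ∀ a t, (a, t) ∈ N → (s, a, t) ∈ D.may

/-- An LTS viewed as a DMTS implementation. -/
def LTS.toDMTS {A S : Type} (I : LTS A S) : DMTS A S :=
  ⟨I.init, I.trans, {p | ∃ a t, (p.1, a, t) ∈ I.trans ∧ p.2 = {(a, t)}}⟩

/-- `R` is a modal refinement between DMTS. -/
def IsDMTSRef {A S1 S2 : Type} (D1 : DMTS A S1) (D2 : DMTS A S2)
    (R : Set (S1 × S2)) : Prop :=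
  ∀ s1 s2, (s1, s2) ∈ R →
    (∀ a t1, (s1, a, t1) ∈ D1.may → ∃ t2, (s2, a, t2) ∈ D2.may ∧ (t1, t2) ∈ R) ∧
    (∀ N2, (s2, N2) ∈ D2.must → ∃ N1, (s1, N1) ∈ D1.must ∧
      ∀ a t1, (a, t1) ∈ N1 → ∃ t2, (a, t2) ∈ N2 ∧ (t1, t2) ∈ R)

/-- DMTS modal refinement `D1 ≤m D2`. -/
def DMTS.Refines {A S1 S2 : Type} (D1 : DMTS A S1) (D2 : DMTS A S2) : Prop :=
  ∃ R, IsDMTSRef D1 D2 R ∧ ∀ s1 ∈ D1.init, ∃ s2 ∈ D2.init, (s1, s2) ∈ R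

/-- An LTS `I` is an implementation of the DMTS `D`, i.e. `I ∈ ⟦D⟧`. -/
def DMTS.Sat {A S T : Type} (D : DMTS A S) (I : LTS A T) : Prop :=
  DMTS.Refines I.toDMTS D

/-- DMTS thorough refinement `D1 ≤th D2`, i.e. `⟦D1⟧ ⊆ ⟦D2⟧`. -/
def DMTS.ThRefines {A S1 S2 : Type} (D1 : DMTS A S1) (D2 : DMTS A S2) : Prop :=
  ∀ (T : Type) [Fintype T] (I : LTS A T), D1.Sat I → D2.Sat I

/-- The DMTS `D` with `s` as the only initial state. -/
def DMTS.atState {A S : Type} (D : DMTS A S) (s : S) : DMTS A S :=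
  ⟨{s}, D.may, D.must⟩

/-- Thorough refinement between states of a DMTS: `t' ≤th t`. -/
def DMTS.stateThLe {A S : Type} (D : DMTS A S) (t' t : S) : Prop :=
  (D.atState t').ThRefines (D.atState t)

/-- The may-completion `mc(D)` of a DMTS. -/
def DMTS.mc {A S : Type} (D : DMTS A S) : DMTS A S :=
  ⟨D.init, {p | ∃ t, (p.1, p.2.1, t) ∈ D.may ∧ D.stateThLe p.2.2 t}, D.must⟩

/-- A (non-deterministic) acceptance automaton. -/
structure AA (A : Type) (S : Type) where
  init : Set S
  Tran : S → Set (Set (A × S))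

/-- `R` is a modal refinement between transition-constraint assignments
(shared by acceptance automata and `L`-expressions). -/
def IsAARef {A S1 S2 : Type} (T1 : S1 → Set (Set (A × S1)))
    (T2 : S2 → Set (Set (A × S2))) (R : Set (S1 × S2)) : Prop :=
  ∀ s1 s2, (s1, s2) ∈ R → ∀ M1 ∈ T1 s1, ∃ M2 ∈ T2 s2,
    (∀ a t1, (a, t1) ∈ M1 → ∃ t2, (a, t2) ∈ M2 ∧ (t1, t2) ∈ R) ∧
    (∀ a t2, (a, t2) ∈ M2 → ∃ t1, (a, t1) ∈ M1 ∧ (t1, t2) ∈ R)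

/-- AA modal refinement `A1 ≤m A2`. -/
def AA.Refines {A S1 S2 : Type} (A1 : AA A S1) (A2 : AA A S2) : Prop :=
  ∃ R, IsAARef A1.Tran A2.Tran R ∧ ∀ s1 ∈ A1.init, ∃ s2 ∈ A2.init, (s1, s2) ∈ R

/-- An LTS viewed as an AA implementation. -/
def LTS.toAA {A S : Type} (I : LTS A S) : AA A S :=
  ⟨I.init, fun s => {{p | (s, p.1, p.2) ∈ I.trans}}⟩

/-- An LTS `I` is an implementation of the AA `Aut`, i.e. `I ∈ ⟦Aut⟧`. -/
def AA.Sat {A S T : Type} (Aut : AA A S) (I : LTS A T) : Prop :=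
  AA.Refines I.toAA Aut

/-- Formulae of the hybrid modal logic `L(X)`. -/
inductive LForm (A : Type) (X : Type) where
  | tt : LForm A X
  | ff : LForm A X
  | dia : A → X → LForm A X
  | neg : LForm A X → LForm A X
  | and : LForm A X → LForm A X → LForm A X

/-- Definable disjunction in `L(X)`. -/
def LForm.lor {A X : Type} (φ ψ : LForm A X) : LForm A X :=
  LForm.neg (LForm.and (LForm.neg φ) (LForm.neg ψ))

/-- Semantics of `L(X)`: a set of subsets of `A × X`. -/
def lsem {A X : Type} : LForm A X → Set (Set (A × X))
  | LForm.tt => Set.univ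
  | LForm.ff => ∅
  | LForm.dia a x => {M | (a, x) ∈ M}
  | LForm.neg φ => (lsem φ)ᶜ
  | LForm.and φ ψ => lsem φ ∩ lsem ψ

/-- An `L`-expression. -/
structure LExpr (A : Type) (X : Type) where
  init : Set X
  Phi : X → LForm A X

/-- Modal refinement of `L`-expressions `E1 ≤m E2`. -/
def LExpr.Refines {A X1 X2 : Type} (E1 : LExpr A X1) (E2 : LExpr A X2) : Prop :=
  ∃ R, IsAARef (fun x => lsem (E1.Phi x)) (fun x => lsem (E2.Phi x)) R ∧
    ∀ x1 ∈ E1.init, ∃ x2 ∈ E2.init, (x1, x2) ∈ R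

/-- An LTS `I` is an implementation of the `L`-expression `E`, i.e. `I ∈ ⟦E⟧`. -/
def LExpr.Sat {A X T : Type} (E : LExpr A X) (I : LTS A T) : Prop :=
  ∃ R, IsAARef (LTS.toAA I).Tran (fun x => lsem (E.Phi x)) R ∧
    ∀ s ∈ I.init, ∃ x ∈ E.init, (s, x) ∈ R

instance {α : Type} [Finite α] : Finite (Set α) :=
  Finite.of_equiv (α → Prop) (Equiv.refl _)

/-- An enumeration of a set over a finite type. -/
noncomputable def setList {α : Type} [Finite α] (s : Set α) : List α :=
  s.toFinite.toFinset.toList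

/-- Finite syntactic conjunction. -/
def listAnd {A X : Type} (l : List (LForm A X)) : LForm A X :=
  l.foldr LForm.and LForm.tt

/-- Finite syntactic disjunction. -/
def listOr {A X : Type} (l : List (LForm A X)) : LForm A X :=
  l.foldr LForm.lor LForm.ff

/-- The translation `bl` from acceptance automata to `L`-expressions:
`Φ(s) = ⋁_{M ∈ Tran(s)} ( ⋀_{(a,t)∈M} ⟨a⟩t ∧ ⋀_{(b,u)∉M} ¬⟨b⟩u )`. -/
noncomputable def bl {A S : Type} [Finite A] [Finite S] (Aut : AA A S) : LExpr A S :=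
  ⟨Aut.init, fun s => listOr ((setList (Aut.Tran s)).map fun M =>
    LForm.and
      (listAnd ((setList M).map fun p => LForm.dia p.1 p.2))
      (listAnd ((setList Mᶜ).map fun p => LForm.neg (LForm.dia p.1 p.2))))⟩

/-- The translation `lb` from `L`-expressions to acceptance automata. -/
def lb {A X : Type} (E : LExpr A X) : AA A X :=
  ⟨E.init, fun x => lsem (E.Phi x)⟩

/-- The translation `db` from DMTS to acceptance automata. -/
def db {A S : Type} (D : DMTS A S) : AA A S :=
  ⟨D.init, fun s => {M | (∀ a t, (a, t) ∈ M → (s, a, t) ∈ D.may) ∧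
      ∀ N, (s, N) ∈ D.must → (N ∩ M).Nonempty}⟩

/-- The state space of the translation `bd`. -/
def bdState {A S : Type} (Aut : AA A S) : Type :=
  {M : Set (A × S) // ∃ s, M ∈ Aut.Tran s}

/-- Must-transitions of `bd(Aut)`. -/
def bdMust {A S : Type} (Aut : AA A S) : Set (bdState Aut × Set (A × bdState Aut)) :=
  {p | ∃ a t, (a, t) ∈ p.1.val ∧ p.2 = {q | q.1 = a ∧ q.2.val ∈ Aut.Tran t}}

/-- The translation `bd` from acceptance automata to DMTS. -/
def bd {A S : Type} (Aut : AA A S) : DMTS A (bdState Aut) :=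
  ⟨{M | ∃ s ∈ Aut.init, M.val ∈ Aut.Tran s},
   {p | ∃ N, (p.1, N) ∈ bdMust Aut ∧ (p.2.1, p.2.2) ∈ N},
   bdMust Aut⟩

/-- Hennessy-Milner formulae `HML(X)`. -/
inductive HML (A : Type) (X : Type) where
  | tt : HML A X
  | ff : HML A X
  | var : X → HML A X
  | dia : A → HML A X → HML A X
  | box : A → HML A X → HML A X
  | and : HML A X → HML A X → HML A X
  | or : HML A X → HML A X → HML A X

/-- Semantics of `HML(X)` over an LTS, relative to an assignment. -/
def hsem {A X S : Type} (I : LTS A S) : HML A X → (X → Set S) → Set S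
  | HML.tt, _ => Set.univ
  | HML.ff, _ => ∅
  | HML.var x, σ => σ x
  | HML.dia a φ, σ => {s | ∃ s', (s, a, s') ∈ I.trans ∧ s' ∈ hsem I φ σ}
  | HML.box a φ, σ => {s | ∀ s', (s, a, s') ∈ I.trans → s' ∈ hsem I φ σ}
  | HML.and φ ψ, σ => hsem I φ σ ∩ hsem I ψ σ
  | HML.or φ ψ, σ => hsem I φ σ ∪ hsem I ψ σ

/-- The greatest (pre)fixed point semantics of a declaration `Δ`. -/
def hgfp {A X S : Type} (I : LTS A S) (Δ : X → HML A X) (x : X) : Set S :=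
  {s | ∃ σ : X → Set S, (∀ y, σ y ⊆ hsem I (Δ y) σ) ∧ s ∈ σ x}

/-- A ν-calculus expression. -/
structure NuExpr (A : Type) (X : Type) where
  init : Set X
  decl : X → HML A X

/-- `I ⊨ N` for a ν-calculus expression. -/
def NuExpr.Models {A X S : Type} (N : NuExpr A X) (I : LTS A S) : Prop :=
  ∀ s0 ∈ I.init, ∃ x0 ∈ N.init, s0 ∈ hgfp I N.decl x0

/-- A ν-calculus expression in normal form, given by its data `◇(x)` and `□ᵃ(x)`:
`Δ(x) = ⋀_{N∈◇(x)}(⋁_{(a,y)∈N} ⟨a⟩y) ∧ ⋀_{a}[a](⋁_{y∈□ᵃ(x)} y)`. -/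
structure NF (A : Type) (X : Type) where
  init : Set X
  dia : X → Set (Set (A × X))
  box : X → A → Set X

/-- Semantics of the normal-form formula `Δ(x)` relative to an assignment `σ`. -/
def nfSem {A X S : Type} (n : NF A X) (I : LTS A S) (σ : X → Set S) (x : X) : Set S :=
  {s | (∀ N ∈ n.dia x, ∃ p ∈ N, ∃ s', (s, p.1, s') ∈ I.trans ∧ s' ∈ σ p.2) ∧
       (∀ a s', (s, a, s') ∈ I.trans → ∃ y ∈ n.box x a, s' ∈ σ y)}

/-- The greatest (pre)fixed point semantics of a normal-form declaration. -/
def nfGfp {A X S : Type} (n : NF A X) (I : LTS A S) (x : X) : Set S :=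
  {s | ∃ σ : X → Set S, (∀ y, σ y ⊆ nfSem n I σ y) ∧ s ∈ σ x}

/-- `I ⊨ N` for a normal-form ν-calculus expression. -/
def NF.Models {A X S : Type} (n : NF A X) (I : LTS A S) : Prop :=
  ∀ s0 ∈ I.init, ∃ x0 ∈ n.init, s0 ∈ nfGfp n I x0

/-- Thorough refinement between variables of a normal-form expression: `x ≤th y`. -/
def NF.varThLe {A X : Type} (n : NF A X) (x y : X) : Prop :=
  ∀ (S : Type) [Fintype S] (I : LTS A S),
    NF.Models ⟨{x}, n.dia, n.box⟩ I → NF.Models ⟨{y}, n.dia, n.box⟩ I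

/-- `R` is a (ν-calculus) modal refinement between normal-form expressions. -/
def IsNFRef {A X1 X2 : Type} (n1 : NF A X1) (n2 : NF A X2)
    (R : Set (X1 × X2)) : Prop :=
  ∀ x1 x2, (x1, x2) ∈ R →
    (∀ a, ∀ y1 ∈ n1.box x1 a, ∃ y2 ∈ n2.box x2 a, (y1, y2) ∈ R) ∧
    (∀ N2 ∈ n2.dia x2, ∃ N1 ∈ n1.dia x1,
      ∀ a y1, (a, y1) ∈ N1 → ∃ y2, (a, y2) ∈ N2 ∧ (y1, y2) ∈ R)

/-- ν-calculus modal refinement `N1 ≤m N2` (normal forms). -/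
def NF.Refines {A X1 X2 : Type} (n1 : NF A X1) (n2 : NF A X2) : Prop :=
  ∃ R, IsNFRef n1 n2 R ∧ ∀ x1 ∈ n1.init, ∃ x2 ∈ n2.init, (x1, x2) ∈ R

/-- `R` is a modal-thorough refinement between normal-form expressions. -/
def IsNFMTRef {A X1 X2 : Type} (n1 : NF A X1) (n2 : NF A X2)
    (R : Set (X1 × X2)) : Prop :=
  ∀ x1 x2, (x1, x2) ∈ R →
    (∀ a, ∀ y1 ∈ n1.box x1 a, ∀ y1', n1.varThLe y1' y1 →
      ∃ y2 ∈ n2.box x2 a, ∃ y2', n2.varThLe y2' y2 ∧ (y1', y2') ∈ R) ∧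
    (∀ N2 ∈ n2.dia x2, ∃ N1 ∈ n1.dia x1,
      ∀ a y1, (a, y1) ∈ N1 → ∃ y2, (a, y2) ∈ N2 ∧ (y1, y2) ∈ R)

/-- ν-calculus modal-thorough refinement `N1 ≤mt N2`. -/
def NF.MTRefines {A X1 X2 : Type} (n1 : NF A X1) (n2 : NF A X2) : Prop :=
  ∃ R, IsNFMTRef n1 n2 R ∧ ∀ x1 ∈ n1.init, ∃ x2 ∈ n2.init, (x1, x2) ∈ R

/-- Mutual ν-calculus modal refinement `N1 ≡m N2`. -/
def NF.MEquiv {A X1 X2 : Type} (n1 : NF A X1) (n2 : NF A X2) : Prop :=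
  n1.Refines n2 ∧ n2.Refines n1

/-- The characteristic-formula translation `ddh` from DMTS to normal-form expressions. -/
def ddh {A S : Type} (D : DMTS A S) : NF A S :=
  ⟨D.init, fun s => {N | (s, N) ∈ D.must}, fun s a => {t | (s, a, t) ∈ D.may}⟩

/-- The (old) semantic translation `hdt` from normal-form expressions to DMTS. -/
def hdt {A X : Type} (n : NF A X) : DMTS A X :=
  ⟨n.init, {p | ∃ y ∈ n.box p.1 p.2.1, n.varThLe p.2.2 y}, {p | p.2 ∈ n.dia p.1}⟩

/-- The (new) syntactic translation `hd` from normal-form expressions to DMTS. -/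
def hd {A X : Type} (n : NF A X) : DMTS A X :=
  ⟨n.init, {p | p.2.2 ∈ n.box p.1 p.2.1}, {p | p.2 ∈ n.dia p.1}⟩

/-- The embedding of LTS into normal-form ν-calculus expressions. -/
def LTS.toNF {A S : Type} (I : LTS A S) : NF A S :=
  ⟨I.init, fun s => {M | ∃ a t, (s, a, t) ∈ I.trans ∧ M = {(a, t)}},
   fun s a => {t | (s, a, t) ∈ I.trans}⟩

/-- Disjunction of normal-form ν-calculus expressions (on disjoint variable sets). -/
def nfOr {A X1 X2 : Type} (n1 : NF A X1) (n2 : NF A X2) : NF A (X1 ⊕ X2) where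
  init := Sum.inl '' n1.init ∪ Sum.inr '' n2.init
  dia := fun x => match x with
    | Sum.inl x1 => (fun N => (fun p : A × X1 => (p.1, Sum.inl p.2)) '' N) '' n1.dia x1
    | Sum.inr x2 => (fun N => (fun p : A × X2 => (p.1, Sum.inr p.2)) '' N) '' n2.dia x2
  box := fun x a => match x with
    | Sum.inl x1 => Sum.inl '' n1.box x1 a
    | Sum.inr x2 => Sum.inr '' n2.box x2 a

/-- Conjunction of normal-form ν-calculus expressions. -/
def nfAnd {A X1 X2 : Type} (n1 : NF A X1) (n2 : NF A X2) : NF A (X1 × X2) where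
  init := n1.init ×ˢ n2.init
  dia := fun x =>
    {M | ∃ N1 ∈ n1.dia x.1, M = {p : A × (X1 × X2) |
      (p.1, p.2.1) ∈ N1 ∧ p.2.1 ∈ n1.box x.1 p.1 ∧ p.2.2 ∈ n2.box x.2 p.1}} ∪
    {M | ∃ N2 ∈ n2.dia x.2, M = {p : A × (X1 × X2) |
      (p.1, p.2.2) ∈ N2 ∧ p.2.1 ∈ n1.box x.1 p.1 ∧ p.2.2 ∈ n2.box x.2 p.1}}
  box := fun x a => (n1.box x.1 a) ×ˢ (n2.box x.2 a)

/-- The bottom normal-form expression `⊥ = (∅, ∅, ∅)`. -/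
def nfBot (A : Type) : NF A Empty :=
  ⟨∅, fun x => x.elim, fun x => x.elim⟩

/-- The top normal-form expression `⊤ = ({s}, {s}, Δ)` with `Δ(s) = tt`. -/
def nfTop (A : Type) : NF A Unit :=
  ⟨{()}, fun _ => ∅, fun _ _ => {()}⟩

/-!
For an implementation, the two refinement clauses at a pair `(s, x)` say exactly that `s`
satisfies `Δ(x)` under the assignment `y ↦ {s | (s, y) ∈ R}`. Hence modal refinements
`I.toNF ≤m N` are the same as post-fixed points of the semantics of `Δ`, and the greatest
of them is `⟦Δ⟧` itself.
-/

section

variable {A X S : Type} (n : NF A X) (I : LTS A S)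

theorem nfGfp_subset_nfSem (y : X) : nfGfp n I y ⊆ nfSem n I (nfGfp n I) y := by
  rintro s ⟨σ, hσ, hs⟩
  obtain ⟨hdia, hbox⟩ := hσ y hs
  constructor
  · intro M hM
    obtain ⟨p, hp, s', hts, hs'⟩ := hdia M hM
    exact ⟨p, hp, s', hts, σ, hσ, hs'⟩
  · intro a s' hts
    obtain ⟨z, hz, hs'⟩ := hbox a s' hts
    exact ⟨z, hz, σ, hσ, hs'⟩

theorem subset_nfGfp {σ : X → Set S} (hσ : ∀ y, σ y ⊆ nfSem n I σ y) (x : X) :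
    σ x ⊆ nfGfp n I x :=
  fun _ hs => ⟨σ, hσ, hs⟩

theorem isNFRef_toNF_iff {R : Set (S × X)} :
    IsNFRef I.toNF n R ↔
      ∀ x, {s | (s, x) ∈ R} ⊆ nfSem n I (fun y => {s | (s, y) ∈ R}) x := by
  refine ⟨fun h x s hsx => ?_, fun h s x hsx => ?_⟩
  · obtain ⟨hbox, hdia⟩ := h s x hsx
    refine ⟨fun M hM => ?_, hbox⟩
    obtain ⟨_, ⟨a, t, hts, rfl⟩, hmatch⟩ := hdia M hM
    obtain ⟨y, hy, hty⟩ := hmatch a t rfl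
    exact ⟨(a, y), hy, t, hts, hty⟩
  · obtain ⟨hdia, hbox⟩ := h x hsx
    refine ⟨hbox, fun M hM => ?_⟩
    obtain ⟨⟨a, y⟩, hy, t, hts, hty⟩ := hdia M hM
    refine ⟨{(a, t)}, ⟨a, t, hts, rfl⟩, ?_⟩
    rintro b t' hb
    obtain ⟨rfl, rfl⟩ := Prod.mk.inj hb
    exact ⟨y, hy, hty⟩

end

theorem models_iff_refines_general {A : Type}
    {S : Type} (I : LTS A S)
    {X : Type} (N : NF A X) :
    N.Models I ↔ NF.Refines I.toNF N := by
  constructor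
  · intro hM
    refine ⟨{p | p.1 ∈ nfGfp N I p.2}, ?_, hM⟩
    exact (isNFRef_toNF_iff N I).2 (nfGfp_subset_nfSem N I)
  · rintro ⟨R, hR, hinit⟩ s0 hs0
    obtain ⟨x0, hx0, hsx0⟩ := hinit s0 hs0
    exact ⟨x0, hx0, subset_nfGfp N I ((isNFRef_toNF_iff N I).1 hR) x0 hsx0⟩

/-- `I ⊨ N` iff `I ≤m N`, where the LTS `I` is regarded as a
ν-calculus implementation via the embedding of LTS into normal forms. -/
theorem models_iff_refines {A : Type} [Fintype A]
    {S : Type} [Fintype S] (I : LTS A S)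
    {X : Type} [Fintype X] (N : NF A X) :
    N.Models I ↔ NF.Refines I.toNF N :=
  models_iff_refines_general I N
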